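/- arXiv:2104.10754 — 2 statements merged into one kernel-verified Lean document; each statement's English description precedes it below -/
import Mathlib

section
/- Let p be a prime and let ε_p = 2 if p = 2, ε_p = 1 if p = 3, ε_p = 0 if p ≥ 5. Then for all n ∈ ℕ, the sum ∑_{1 ≤ k ≤ n, p ∤ k} 1/k² is divisible by p^{max(0, ord_p(n) − ε_p + δ_{p,2})} in ℤ_p, where δ_{p,2} = 1 if p = 2 and 0 otherwise. -/
/-!
Write `v = ord_p n`, `q = p ^ v` and `n = q m`. For `p ∤ k` we have `1 / k² ≡ w² (mod q)` in
`ℚ_p`, where `w` represents `k⁻¹` in `ZMod q`. The reduction of the summand modulo `q` only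
depends on `k mod q`, and `k ↦ k⁻¹` permutes the units of `ZMod q`, so the sum is congruent
modulo `q` to `m · D`, where `D = ∑_{r ≤ q, p ∤ r} r²`. Elementary summation gives
`6 D = q (p - 1) (2 q² / p - 1)`, so `ord_p D ≥ v - ord_p 6`, and `ord_p 6` is exactly the
correction `ε_p - δ_{p,2}`.
-/

open Finset

namespace ZMod

variable {M : Type*} [AddCommMonoid M] {q : ℕ} [NeZero q]

theorem sum_range_natCast (f : ZMod q → M) : ∑ k ∈ range q, f k = ∑ x, f x :=
  sum_nbij' (fun k => (k : ZMod q)) val (by simp) (by simp [val_lt])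
    (fun _ hk => val_cast_of_lt (mem_range.1 hk)) (fun x _ => natCast_zmod_val x) (fun _ _ => rfl)

theorem sum_Ico_natCast (f : ZMod q → M) (a : ℕ) :
    ∑ k ∈ Ico a (a + q), f k = ∑ x, f x := by
  rw [sum_Ico_eq_sum_range, Nat.add_sub_cancel_left]
  push_cast
  rw [sum_range_natCast fun x : ZMod q => f (a + x)]
  exact Fintype.sum_equiv (Equiv.addLeft (a : ZMod q)) _ _ fun _ => rfl

theorem sum_Ico_natCast_mul (f : ZMod q → M) (a m : ℕ) :
    ∑ k ∈ Ico a (a + q * m), f k = m • ∑ x, f x := by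
  induction m with
  | zero => simp
  | succ m ih =>
    rw [mul_add_one, ← add_assoc, ← sum_Ico_consecutive _ (Nat.le_add_right a _)
      (Nat.le_add_right _ q), ih, sum_Ico_natCast, succ_nsmul]

open scoped Classical in
theorem sum_Ico_filter_isUnit (g : ZMod q → M) (a m : ℕ) :
    ∑ k ∈ (Ico a (a + q * m)).filter (fun k : ℕ => IsUnit (k : ZMod q)), g k
      = m • ∑ x ∈ univ.filter IsUnit, g x := by
  simp only [sum_filter]
  exact sum_Ico_natCast_mul (fun x => if IsUnit x then g x else 0) a m

open scoped Classical in
theorem sum_filter_isUnit_inv (g : ZMod q → M) :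
    ∑ x ∈ univ.filter IsUnit, g x⁻¹ = ∑ x ∈ univ.filter IsUnit, g x := by
  refine sum_nbij' (·⁻¹) (·⁻¹) ?_ ?_ ?_ ?_ fun _ _ => rfl <;>
  · rintro _ hx
    obtain ⟨u, rfl⟩ := (mem_filter.1 hx).2
    simp [inv_coe_unit]

end ZMod

theorem six_mul_sum_Icc_sq (n : ℕ) :
    6 * ∑ i ∈ Icc 1 n, (i : ℤ) ^ 2 = n * (n + 1) * (2 * n + 1) := by
  induction n with
  | zero => simp
  | succ n ih =>
    rw [sum_Icc_succ_top (by omega), mul_add, ih]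
    push_cast
    ring

theorem sum_filter_dvd_Icc_mul {M : Type*} [AddCommMonoid M] {p : ℕ} (hp : 0 < p) (N : ℕ)
    (f : ℕ → M) :
    ∑ r ∈ (Icc 1 (p * N)).filter (p ∣ ·), f r = ∑ s ∈ Icc 1 N, f (p * s) := by
  symm
  refine sum_nbij' (p * ·) (· / p) ?_ ?_ (fun s _ => Nat.mul_div_cancel_left s hp) ?_
    (fun _ _ => rfl)
  · intro s hs
    simp only [mem_filter, mem_Icc] at hs ⊢
    exact ⟨⟨Nat.mul_pos hp hs.1, Nat.mul_le_mul_left _ hs.2⟩, dvd_mul_right p s⟩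
  · intro r hr
    simp only [mem_filter, mem_Icc] at hr ⊢
    obtain ⟨⟨h1, h2⟩, s, rfl⟩ := hr
    rw [Nat.mul_div_cancel_left s hp]
    exact ⟨Nat.pos_of_ne_zero (by rintro rfl; simp at h1), Nat.le_of_mul_le_mul_left h2 hp⟩
  · intro r hr
    simp only [mem_filter] at hr
    exact Nat.mul_div_cancel' hr.2

theorem six_mul_sum_sq_filter_not_dvd {p : ℕ} (hp : 0 < p) (N : ℕ) :
    6 * ∑ r ∈ (Icc 1 (p * N)).filter (¬ p ∣ ·), (r : ℤ) ^ 2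
      = p * N * (p - 1) * (2 * p * N ^ 2 - 1) := by
  have hsplit := sum_filter_add_sum_filter_not (Icc 1 (p * N)) (p ∣ ·) fun r => (r : ℤ) ^ 2
  rw [sum_filter_dvd_Icc_mul hp] at hsplit
  have hpN := six_mul_sum_Icc_sq (p * N)
  have hN := six_mul_sum_Icc_sq N
  simp only [Nat.cast_mul, mul_pow] at hsplit hpN
  rw [← mul_sum] at hsplit
  linear_combination hpN - (p : ℤ) ^ 2 * hN + 6 * hsplit

section PrimePower

variable {p : ℕ} [hp : Fact p.Prime] {v : ℕ}

theorem isUnit_natCast_zmod_pow_iff (hv : v ≠ 0) (k : ℕ) :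
    IsUnit (k : ZMod (p ^ v)) ↔ ¬ p ∣ k := by
  rw [ZMod.isUnit_iff_coprime, Nat.coprime_pow_right_iff (Nat.pos_of_ne_zero hv),
    Nat.coprime_comm, hp.out.coprime_iff_not_dvd]

theorem sum_inv_sq_zmod_pow (hv : v ≠ 0) (m : ℕ) :
    ∑ k ∈ (Icc 1 (p ^ v * m)).filter (¬ p ∣ ·), ((k : ZMod (p ^ v))⁻¹) ^ 2
      = m * ∑ k ∈ (Icc 1 (p ^ v)).filter (¬ p ∣ ·), (k : ZMod (p ^ v)) ^ 2 := by
  classical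
  have : NeZero (p ^ v) := ⟨pow_ne_zero v hp.out.ne_zero⟩
  have hunits : ∀ N, (Icc 1 (p ^ v * N)).filter (¬ p ∣ ·)
      = (Ico 1 (1 + p ^ v * N)).filter (fun k : ℕ => IsUnit (k : ZMod (p ^ v))) := by
    intro N
    ext k
    simp only [mem_filter, mem_Icc, mem_Ico, isUnit_natCast_zmod_pow_iff hv]
    omega
  have hperiod := ZMod.sum_Ico_filter_isUnit (q := p ^ v) (· ^ 2) 1 1
  rw [← hunits, mul_one, one_smul] at hperiod
  rw [hunits, ZMod.sum_Ico_filter_isUnit (fun x => x⁻¹ ^ 2),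
    ZMod.sum_filter_isUnit_inv (· ^ 2), hperiod, nsmul_eq_mul]

theorem norm_natCast_eq_one_of_not_dvd {k : ℕ} (hk : ¬ p ∣ k) : ‖(k : ℚ_[p])‖ = 1 :=
  Padic.norm_natCast_eq_one_iff.2 (hp.out.coprime_iff_not_dvd.2 hk)

theorem norm_one_div_sq_sub_sq_le {k w : ℕ} (hk : ¬ p ∣ k) (hkw : k * w ≡ 1 [MOD p ^ v]) :
    ‖1 / (k : ℚ_[p]) ^ 2 - (w : ℚ_[p]) ^ 2‖ ≤ (p : ℝ) ^ (-v : ℤ) := by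
  have hk1 := norm_natCast_eq_one_of_not_dvd hk
  have hk0 : (k : ℚ_[p]) ≠ 0 := norm_ne_zero_iff.1 (by rw [hk1]; exact one_ne_zero)
  have hdvd : ((p ^ v : ℕ) : ℤ) ∣ 1 - k * w := by exact_mod_cast (Nat.modEq_iff_dvd.1 hkw)
  have hfactor : 1 / (k : ℚ_[p]) ^ 2 - (w : ℚ_[p]) ^ 2
      = ((1 - k * w : ℤ) : ℚ_[p]) * ((1 + k * w : ℤ) : ℚ_[p]) / (k : ℚ_[p]) ^ 2 := by
    push_cast
    field_simp
    ring
  rw [hfactor, norm_div, norm_mul, norm_pow, hk1, one_pow, div_one]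
  calc ‖((1 - k * w : ℤ) : ℚ_[p])‖ * ‖((1 + k * w : ℤ) : ℚ_[p])‖
      ≤ (p : ℝ) ^ (-v : ℤ) * 1 :=
        mul_le_mul ((Padic.norm_int_le_pow_iff_dvd _ _).2 (by exact_mod_cast hdvd))
          (Padic.norm_int_le_one _) (norm_nonneg _) (by positivity)
    _ = (p : ℝ) ^ (-v : ℤ) := mul_one _

theorem norm_intCast_le_of_zmod_pow_eq_zero {x : ℤ} (hx : (x : ZMod (p ^ v)) = 0) :
    ‖(x : ℚ_[p])‖ ≤ (p : ℝ) ^ (-v : ℤ) :=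
  (Padic.norm_int_le_pow_iff_dvd _ _).2
    (by exact_mod_cast (ZMod.intCast_zmod_eq_zero_iff_dvd _ _).1 hx)

theorem norm_sum_one_div_sq_sub_le (hv : v ≠ 0) (m : ℕ) :
    ‖∑ k ∈ (Icc 1 (p ^ v * m)).filter (¬ p ∣ ·), 1 / (k : ℚ_[p]) ^ 2
      - m * ((∑ r ∈ (Icc 1 (p ^ v)).filter (¬ p ∣ ·), (r : ℤ) ^ 2 : ℤ) : ℚ_[p])‖
      ≤ (p : ℝ) ^ (-v : ℤ) := by
  have : NeZero (p ^ v) := ⟨pow_ne_zero v hp.out.ne_zero⟩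
  set S := ∑ k ∈ (Icc 1 (p ^ v * m)).filter (¬ p ∣ ·), 1 / (k : ℚ_[p]) ^ 2 with hS
  set D : ℤ := ∑ r ∈ (Icc 1 (p ^ v)).filter (¬ p ∣ ·), (r : ℤ) ^ 2 with hD
  set w : ℕ → ℕ := fun k => ((k : ZMod (p ^ v))⁻¹).val with hw
  have hinv : ∀ k, ¬ p ∣ k → k * w k ≡ 1 [MOD p ^ v] := by
    intro k hk
    rw [← ZMod.natCast_eq_natCast_iff, Nat.cast_mul, hw, ZMod.natCast_zmod_val, Nat.cast_one]
    exact ZMod.mul_inv_of_unit _ ((isUnit_natCast_zmod_pow_iff hv k).2 hk)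
  set W : ℤ := ∑ k ∈ (Icc 1 (p ^ v * m)).filter (¬ p ∣ ·), (w k : ℤ) ^ 2 with hW
  have hSW : ‖S - W‖ ≤ (p : ℝ) ^ (-v : ℤ) := by
    rw [hS, hW, Int.cast_sum, ← sum_sub_distrib]
    refine IsUltrametricDist.norm_sum_le_of_forall_le_of_nonneg (by positivity) fun k hk => ?_
    have hk := (mem_filter.1 hk).2
    exact_mod_cast norm_one_div_sq_sub_sq_le hk (hinv k hk)
  have hWD : ‖((W - m * D : ℤ) : ℚ_[p])‖ ≤ (p : ℝ) ^ (-v : ℤ) := by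
    refine norm_intCast_le_of_zmod_pow_eq_zero ?_
    push_cast [hW, hD, hw, ZMod.natCast_zmod_val]
    rw [sum_inv_sq_zmod_pow hv m, sub_self]
  calc ‖S - m * D‖ = ‖(S - W) + ((W - m * D : ℤ) : ℚ_[p])‖ := by push_cast; ring_nf
    _ ≤ _ := (IsUltrametricDist.norm_add_le_max _ _).trans (max_le hSW hWD)

theorem norm_sum_sq_filter_not_dvd_le (hv : v ≠ 0) :
    ‖((∑ r ∈ (Icc 1 (p ^ v)).filter (¬ p ∣ ·), (r : ℤ) ^ 2 : ℤ) : ℚ_[p])‖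
      ≤ (p : ℝ) ^ ((padicValNat p 6 : ℤ) - v) := by
  obtain ⟨u, rfl⟩ := Nat.exists_eq_succ_of_ne_zero hv
  set D : ℤ := ∑ r ∈ (Icc 1 (p ^ (u + 1))).filter (¬ p ∣ ·), (r : ℤ) ^ 2
  have h6 : 6 * D = p ^ (u + 1) * ((p - 1) * (2 * p * (p : ℤ) ^ (2 * u) - 1)) := by
    have := six_mul_sum_sq_filter_not_dvd hp.out.pos (p ^ u)
    rw [← pow_succ'] at this
    rw [this]
    push_cast
    ring
  have hp0 : (p : ℝ) ≠ 0 := by exact_mod_cast hp.out.ne_zero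
  have h : (p : ℝ) ^ (-(padicValNat p 6 : ℤ)) * ‖(D : ℚ_[p])‖
      ≤ (p : ℝ) ^ (-(u + 1 : ℕ) : ℤ) := by
    rw [← Padic.valuation_ofNat, ← Padic.norm_eq_zpow_neg_valuation (by norm_num), ← norm_mul]
    have h6D := (Padic.norm_int_le_pow_iff_dvd (p := p) (6 * D) (u + 1)).2
      (by rw [h6]; exact dvd_mul_right _ _)
    rwa [Int.cast_mul, Int.cast_ofNat] at h6D
  calc ‖(D : ℚ_[p])‖ = (p : ℝ) ^ (padicValNat p 6 : ℤ)
        * ((p : ℝ) ^ (-(padicValNat p 6 : ℤ)) * ‖(D : ℚ_[p])‖) := by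
        rw [← mul_assoc, ← zpow_add₀ hp0, add_neg_cancel, zpow_zero, one_mul]
    _ ≤ (p : ℝ) ^ (padicValNat p 6 : ℤ) * (p : ℝ) ^ (-(u + 1 : ℕ) : ℤ) := by gcongr
    _ = _ := by rw [← zpow_add₀ hp0, sub_eq_add_neg]

variable (p) in
theorem norm_sum_one_div_sq_le_one (n : ℕ) :
    ‖∑ k ∈ (Icc 1 n).filter (¬ p ∣ ·), 1 / (k : ℚ_[p]) ^ 2‖ ≤ 1 :=
  IsUltrametricDist.norm_sum_le_of_forall_le_of_nonneg zero_le_one fun k hk => by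
    rw [norm_div, norm_one, norm_pow, norm_natCast_eq_one_of_not_dvd (mem_filter.1 hk).2,
      one_pow, div_one]

variable (p) in
theorem norm_sum_one_div_sq_le (n : ℕ) :
    ‖∑ k ∈ (Icc 1 n).filter (¬ p ∣ ·), 1 / (k : ℚ_[p]) ^ 2‖
      ≤ (p : ℝ) ^ ((padicValNat p 6 : ℤ) - padicValNat p n) := by
  set v := padicValNat p n
  rcases eq_or_ne v 0 with hv | hv
  · rw [hv, Nat.cast_zero, sub_zero, zpow_natCast]
    exact (norm_sum_one_div_sq_le_one p n).trans
      (one_le_pow₀ (by exact_mod_cast hp.out.one_le))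
  obtain ⟨m, hm⟩ : p ^ v ∣ n := pow_padicValNat_dvd
  rw [hm]
  set S := ∑ k ∈ (Icc 1 (p ^ v * m)).filter (¬ p ∣ ·), 1 / (k : ℚ_[p]) ^ 2
  set D : ℚ_[p] :=
    ((∑ r ∈ (Icc 1 (p ^ v)).filter (¬ p ∣ ·), (r : ℤ) ^ 2 : ℤ) : ℚ_[p])
  have hmD : ‖(m : ℚ_[p]) * D‖ ≤ (p : ℝ) ^ ((padicValNat p 6 : ℤ) - v) := by
    rw [norm_mul]
    exact (mul_le_of_le_one_left (norm_nonneg _)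
      (IsUltrametricDist.norm_natCast_le_one ℚ_[p] m)).trans (norm_sum_sq_filter_not_dvd_le hv)
  have hSmD : ‖S - m * D‖ ≤ (p : ℝ) ^ ((padicValNat p 6 : ℤ) - v) :=
    (norm_sum_one_div_sq_sub_le hv m).trans
      (zpow_le_zpow_right₀ (by exact_mod_cast hp.out.one_le) (by omega))
  calc ‖S‖ = ‖(S - m * D) + m * D‖ := by rw [sub_add_cancel]
    _ ≤ _ := (IsUltrametricDist.norm_add_le_max _ _).trans (max_le hSmD hmD)

end PrimePower

theorem padicValNat_six (p : ℕ) [Fact p.Prime] :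
    (padicValNat p 6 : ℤ)
      = (if p = 2 then 2 else if p = 3 then 1 else 0) - (if p = 2 then 1 else 0) := by
  rw [show 6 = 2 * 3 from rfl, padicValNat.mul two_ne_zero three_ne_zero]
  by_cases h2 : p = 2
  · subst h2
    simp [padicValNat_primes]
  by_cases h3 : p = 3
  · subst h3
    simp [padicValNat_primes]
  · simp [padicValNat_primes, h2, h3]

theorem stmt_3_general (p : ℕ) [Fact p.Prime] (n : ℕ) :
    ‖((∑ k ∈ (Finset.Icc 1 n).filter (fun k => ¬ p ∣ k), (1 : ℚ) / (k ^ 2) : ℚ) : ℚ_[p])‖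
      ≤ (p : ℝ) ^ (-(max 0 ((padicValNat p n : ℤ) -
          (if p = 2 then 2 else if p = 3 then 1 else 0) + (if p = 2 then 1 else 0)))) := by
  have hexp : (padicValNat p n : ℤ) - (if p = 2 then 2 else if p = 3 then 1 else 0)
      + (if p = 2 then 1 else 0) = padicValNat p n - padicValNat p 6 := by
    rw [padicValNat_six]
    ring
  rw [hexp, Rat.cast_sum]
  simp only [Rat.cast_div, Rat.cast_one, Rat.cast_pow, Rat.cast_natCast]
  rcases le_total ((padicValNat p n : ℤ) - padicValNat p 6) 0 with h | h
  · rw [max_eq_left h, neg_zero, zpow_zero]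
    exact norm_sum_one_div_sq_le_one p n
  · rw [max_eq_right h, neg_sub]
    exact norm_sum_one_div_sq_le p n

theorem stmt_3 (p : ℕ) [Fact p.Prime] (n : ℕ) (hn : 0 < n) :
    ‖((∑ k ∈ (Finset.Icc 1 n).filter (fun k => ¬ p ∣ k), (1 : ℚ) / (k ^ 2) : ℚ) : ℚ_[p])‖
      ≤ (p : ℝ) ^ (-(max 0 ((padicValNat p n : ℤ) -
          (if p = 2 then 2 else if p = 3 then 1 else 0) + (if p = 2 then 1 else 0)))) :=
  stmt_3_general p n
end

section
/- Let V ∈ z·ℚ⟦z⟧, ν ∈ ℚ, and define ∫V by sending z^n to z^n/n coefficientwise. Suppose V^{(+,ν)} ∈ z·ℚ⟦z⟧ satisfies the functional equation ∫V^{(+,ν)}(z·exp(−ν·∫V(z))) = ∫V(z). Then for all n ≥ 1 with ν ≠ 0, the n-th coefficient of V^{(+,ν)} equals (1/ν)·[exp(ν n ∫V(z))/z^n]_0, where [·]_0 extracts the coefficient of z^0. -/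
/-- The formal exponential power series `∑ zⁿ/n!`. -/
noncomputable def pexp (K : Type*) [Field K] : PowerSeries K :=
  PowerSeries.mk fun n => 1 / (n.factorial : K)

/-- Composition `H(G(z))` of formal power series (meaningful when `G` has zero
constant term). -/
noncomputable def pcomp {K : Type*} [Field K] (H G : PowerSeries K) : PowerSeries K :=
  PowerSeries.mk fun n =>
    ∑ k ∈ Finset.range (n + 1), PowerSeries.coeff k H * PowerSeries.coeff n (G ^ k)

/-- Logarithmic integration `∫ : zⁿ ↦ zⁿ/n`. -/
noncomputable def intOp (V : PowerSeries ℚ) : PowerSeries ℚ :=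
  PowerSeries.mk fun n => if n = 0 then 0 else PowerSeries.coeff n V / (n : ℚ)


/-!
Write `U = ∫V`, `F = z·exp(-νU)` and `E = exp(nνU)`, so that `(∫W) ∘ F = U`. Differentiating,
multiplying by `E` and reading off the coefficient of `zⁿ⁻¹` gives
`[zⁿ⁻¹] U'E = ∑ₖ [zᵏ]∫W · [zⁿ⁻¹] (Fᵏ)'E`. Here
`(Fᵏ)'E = k zᵏ⁻¹ (exp(jνU) - ν z U' exp(jνU))` with `j = n - k`, and reading the derivative of
`exp(jνU)` at `zʲ⁻¹` gives `[zʲ] exp(jνU) = ν [zʲ⁻¹] U' exp(jνU)`. So every term with `k < n`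
vanishes and the sum is `n [zⁿ]∫W = [zⁿ]W`, while the same identity for `j = n` turns the left
side into `(1/ν) [zⁿ] E`.
-/

open PowerSeries Finset

lemma coeff_pow_eq_zero_of_lt {R : Type*} [CommSemiring R] {G : R⟦X⟧}
    (hG : constantCoeff G = 0) {j k : ℕ} (h : j < k) : coeff j (G ^ k) = 0 :=
  X_pow_dvd_iff.mp (pow_dvd_pow_of_dvd (X_dvd_iff.mpr hG) k) j h

lemma coeff_derivative_mul_congr {R : Type*} [CommSemiring R] {f g : R⟦X⟧} (E : R⟦X⟧) {m : ℕ}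
    (h : ∀ i ≤ m + 1, coeff i f = coeff i g) :
    coeff m (d⁄dX R f * E) = coeff m (d⁄dX R g * E) := by
  rw [coeff_mul, coeff_mul]
  refine sum_congr rfl fun p hp => ?_
  rw [coeff_derivative, coeff_derivative, h]
  have := mem_antidiagonal.mp hp
  omega

section Composition

variable {K : Type*} [Field K]

lemma coeff_pcomp (H G : K⟦X⟧) (j : ℕ) :
    coeff j (pcomp H G) = ∑ k ∈ range (j + 1), coeff k H * coeff j (G ^ k) := by
  simp [pcomp]

lemma pcomp_eq_subst {G : K⟦X⟧} (hG : constantCoeff G = 0) (H : K⟦X⟧) :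
    pcomp H G = H.subst G := by
  ext j
  rw [coeff_pcomp, coeff_subst' (HasSubst.of_constantCoeff_zero' hG),
    finsum_eq_sum_of_support_subset (s := range (j + 1))]
  · simp only [smul_eq_mul]
  · intro k hk
    by_contra hkj
    simp only [Function.mem_support] at hk
    exact hk (by rw [coeff_pow_eq_zero_of_lt hG (by simpa using hkj), smul_zero])

lemma coeff_pcomp_eq_coeff_sum {G : K⟦X⟧} (hG : constantCoeff G = 0) (H : K⟦X⟧) {j N : ℕ}
    (hj : j ≤ N) :
    coeff j (pcomp H G) = coeff j (∑ k ∈ range (N + 1), coeff k H • G ^ k) := by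
  rw [coeff_pcomp, map_sum]
  simp only [coeff_smul, smul_eq_mul]
  refine sum_subset (range_subset_range.mpr (by omega)) fun k _ hk => ?_
  rw [coeff_pow_eq_zero_of_lt hG (by rw [mem_range] at hk; omega), mul_zero]

lemma coeff_derivative_pcomp_mul {G : K⟦X⟧} (hG : constantCoeff G = 0) (H E : K⟦X⟧) (m : ℕ) :
    coeff m (d⁄dX K (pcomp H G) * E) =
      ∑ k ∈ range (m + 2), coeff k H * coeff m (d⁄dX K (G ^ k) * E) := by
  rw [coeff_derivative_mul_congr E fun i hi => coeff_pcomp_eq_coeff_sum hG H hi]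
  simp only [map_sum, Derivation.map_smul, sum_mul, smul_mul_assoc, coeff_smul, smul_eq_mul]

end Composition

lemma pexp_eq_exp (K : Type*) [Field K] [Algebra ℚ K] : pexp K = exp K := by
  ext n
  simp [pexp, coeff_exp]

section Exponential

variable {A : Type*} [CommRing A] [Algebra ℚ A] {U : A⟦X⟧}

noncomputable def expSMul (c : A) (U : A⟦X⟧) : A⟦X⟧ := (exp A).subst (c • U)

lemma expSMul_eq_subst_rescale (hU : HasSubst U) (c : A) :
    expSMul c U = (rescale c (exp A)).subst U := by
  rw [rescale_eq_subst, subst_comp_subst_apply (HasSubst.smul_X' c) hU, subst_smul hU,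
    subst_X hU, expSMul]

lemma expSMul_mul_expSMul (hU : HasSubst U) (a b : A) :
    expSMul a U * expSMul b U = expSMul (a + b) U := by
  rw [expSMul_eq_subst_rescale hU, expSMul_eq_subst_rescale hU, expSMul_eq_subst_rescale hU,
    ← subst_mul hU, exp_mul_exp_eq_exp_add]

lemma expSMul_zero (hU : HasSubst U) : expSMul 0 U = 1 := by
  rw [expSMul_eq_subst_rescale hU, rescale_zero_apply, constantCoeff_exp, map_one,
    ← coe_substAlgHom hU, map_one]

lemma expSMul_pow (hU : HasSubst U) (c : A) (k : ℕ) :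
    expSMul c U ^ k = expSMul (k * c) U := by
  induction k with
  | zero => simp [expSMul_zero hU]
  | succ k ih => rw [pow_succ, ih, expSMul_mul_expSMul hU]; push_cast; ring_nf

lemma derivative_expSMul (hU : HasSubst U) (c : A) :
    d⁄dX A (expSMul c U) = c • (d⁄dX A U * expSMul c U) := by
  rw [expSMul, derivative_subst (hU.smul' c), derivative_exp, Derivation.map_smul,
    mul_smul_comm, mul_comm]

lemma derivative_X_mul_expSMul_pow_mul (hU : HasSubst U) (ν : A) (i j : ℕ) :
    d⁄dX A ((X * expSMul (-ν) U) ^ (i + 1)) * expSMul (ν * ((i + 1 + j : ℕ) : A)) U =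
      ((i + 1 : ℕ) : A) •
        (X ^ i * (expSMul (ν * j) U - ν • (X * (d⁄dX A U * expSMul (ν * j) U)))) := by
  have hprod : expSMul ((i + 1 : ℕ) * -ν) U * expSMul (ν * ((i + 1 + j : ℕ) : A)) U =
      expSMul (ν * j) U := by
    rw [expSMul_mul_expSMul hU]; congr 1; push_cast; ring
  rw [mul_pow, expSMul_pow hU, Derivation.leibniz, derivative_expSMul hU, Derivation.leibniz_pow,
    derivative_X, ← hprod]
  generalize expSMul ((i + 1 : ℕ) * -ν) U = e
  generalize expSMul (ν * ((i + 1 + j : ℕ) : A)) U = E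
  simp only [smul_eq_C_mul, nsmul_eq_mul, map_mul, map_neg, map_natCast, Nat.add_sub_cancel]
  push_cast
  ring

end Exponential

section Residue

variable {K : Type*} [Field K] [Algebra ℚ K] {U : K⟦X⟧}

/-- For `U = ∫V` (so `z U' = V`) this is the integration by parts
`[V exp(νj∫V) / zʲ]₀ = (1/ν) [exp(νj∫V) / zʲ]₀`. -/
lemma mul_coeff_derivative_mul_expSMul (hU : HasSubst U) (ν : K) (l : ℕ) :
    ν * coeff l (d⁄dX K U * expSMul (ν * ((l + 1 : ℕ) : K)) U) =
      coeff (l + 1) (expSMul (ν * ((l + 1 : ℕ) : K)) U) := by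
  have h := congrArg (coeff l) (derivative_expSMul hU (ν * ((l + 1 : ℕ) : K)))
  rw [coeff_derivative, coeff_smul, smul_eq_mul] at h
  have := algebraRat.charZero K
  apply mul_right_cancel₀ (Nat.cast_add_one_ne_zero l)
  push_cast at h ⊢
  linear_combination -h

lemma coeff_derivative_X_mul_expSMul_pow_mul (hU : HasSubst U) (ν : K) {k m : ℕ}
    (hk : k ≤ m + 1) :
    coeff m (d⁄dX K ((X * expSMul (-ν) U) ^ k) * expSMul (ν * ((m + 1 : ℕ) : K)) U) =
      if k = m + 1 then (m + 1 : K) else 0 := by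
  rcases k with _ | i
  · simp
  obtain ⟨j, rfl⟩ : ∃ j, m = j + i := ⟨m - i, by omega⟩
  rw [show j + i + 1 = i + 1 + j by ring, derivative_X_mul_expSMul_pow_mul hU ν i j, coeff_smul,
    coeff_X_pow_mul]
  rcases j with _ | l
  · simp [expSMul_zero hU]
  · rw [map_sub, coeff_smul, coeff_succ_X_mul, smul_eq_mul, smul_eq_mul,
      mul_coeff_derivative_mul_expSMul hU, sub_self, mul_zero, if_neg (by omega)]

lemma coeff_derivative_pcomp_X_mul_expSMul_mul (hU : HasSubst U) (ν : K) (H : K⟦X⟧) (m : ℕ) :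
    coeff m (d⁄dX K (pcomp H (X * expSMul (-ν) U)) * expSMul (ν * ((m + 1 : ℕ) : K)) U) =
      (m + 1) * coeff (m + 1) H := by
  rw [coeff_derivative_pcomp_mul (by simp) H, sum_congr rfl fun k hk => by
    rw [coeff_derivative_X_mul_expSMul_pow_mul hU ν (Nat.lt_succ_iff.mp (mem_range.mp hk))]]
  simp [mul_comm]

end Residue

theorem stmt_17_general (V W : PowerSeries ℚ)
    (ν : ℚ) (hν : ν ≠ 0)
    (hfe : pcomp (intOp W) (PowerSeries.X * pcomp (pexp ℚ) ((-ν) • intOp V)) = intOp V)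
    (n : ℕ) (hn : 0 < n) :
    PowerSeries.coeff n W =
      (1 / ν) * PowerSeries.coeff n (pcomp (pexp ℚ) ((ν * (n : ℚ)) • intOp V)) := by
  obtain ⟨m, rfl⟩ : ∃ m, n = m + 1 := ⟨n - 1, by omega⟩
  have hU0 : constantCoeff (intOp V) = 0 := by simp [intOp]
  have hU : HasSubst (intOp V) := HasSubst.of_constantCoeff_zero' hU0
  have hexp (c : ℚ) : pcomp (pexp ℚ) (c • intOp V) = expSMul c (intOp V) := by
    rw [pcomp_eq_subst (by simp [hU0]), pexp_eq_exp, expSMul]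
  rw [hexp] at hfe ⊢
  calc coeff (m + 1) W = (m + 1) * coeff (m + 1) (intOp W) := by
        rw [intOp, coeff_mk, if_neg m.succ_ne_zero]; push_cast; field_simp
    _ = coeff m (d⁄dX ℚ (intOp V) * expSMul (ν * ((m + 1 : ℕ) : ℚ)) (intOp V)) := by
        rw [← coeff_derivative_pcomp_X_mul_expSMul_mul hU ν (intOp W) m, hfe]
    _ = 1 / ν * coeff (m + 1) (expSMul (ν * ((m + 1 : ℕ) : ℚ)) (intOp V)) := by
        rw [← mul_coeff_derivative_mul_expSMul hU ν m, one_div, inv_mul_cancel_left₀ hν]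

theorem stmt_17 (V W : PowerSeries ℚ)
    (hV0 : PowerSeries.constantCoeff V = 0) (hW0 : PowerSeries.constantCoeff W = 0)
    (ν : ℚ) (hν : ν ≠ 0)
    (hfe : pcomp (intOp W) (PowerSeries.X * pcomp (pexp ℚ) ((-ν) • intOp V)) = intOp V)
    (n : ℕ) (hn : 0 < n) :
    PowerSeries.coeff n W =
      (1 / ν) * PowerSeries.coeff n (pcomp (pexp ℚ) ((ν * (n : ℚ)) • intOp V)) :=
  stmt_17_general V W ν hν hfe n hn
end
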